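/- Let η^{αβ} be a constant symmetric invertible real n×n matrix, let F be a smooth solution of the associativity (WDVV-type) equations on ℝⁿ, let k ≥ 0, and let v_0, …, v_k be smooth vector-valued functions on ℝⁿ with v_0^β(x) = x^β, v_1^β = η^{βν} ∂_ν F (if k ≥ 1), and satisfying the recursion ∂_α∂_γ v_j^β = η^{νκ} ∂_α∂_γ∂_κ F ∂_ν v_{j−1}^β for all α,β,γ and all j = 2,…,k. Then for each fixed pair of indices α, β, the function G = Σ_{j=0}^{k} (−1)^j v_j^α v_{k−j}^β is a symmetry characteristic of the associativity equations at F, i.e. it satisfies their linearization. -/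

import Mathlib

/-- Partial derivative of `f` in the `i`-th coordinate direction on `ℝⁿ`. -/
noncomputable def pd {n : ℕ} (i : Fin n) (f : (Fin n → ℝ) → ℝ) : (Fin n → ℝ) → ℝ :=
  fun x => fderiv ℝ f x (Pi.single i 1)

set_option maxHeartbeats 1000000

variable {n : ℕ}

theorem contDiff_pd (i : Fin n) {f : (Fin n → ℝ) → ℝ} (hf : ContDiff ℝ (⊤ : ℕ∞) f) :
    ContDiff ℝ (⊤ : ℕ∞) (pd i f) :=
  (hf.fderiv_right (by simp)).clm_apply contDiff_const

theorem pd_add {f g : (Fin n → ℝ) → ℝ} (i : Fin n) (x : Fin n → ℝ)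
    (hf : DifferentiableAt ℝ f x) (hg : DifferentiableAt ℝ g x) :
    pd i (fun y => f y + g y) x = pd i f x + pd i g x := by
  simp [pd, fderiv_fun_add hf hg]

theorem pd_mul {f g : (Fin n → ℝ) → ℝ} (i : Fin n) (x : Fin n → ℝ)
    (hf : DifferentiableAt ℝ f x) (hg : DifferentiableAt ℝ g x) :
    pd i (fun y => f y * g y) x = pd i f x * g x + f x * pd i g x := by
  simp [pd, fderiv_fun_mul hf hg]; ring

theorem pd_sum {s : Finset ℕ} {A : ℕ → (Fin n → ℝ) → ℝ} (i : Fin n) (x : Fin n → ℝ)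
    (h : ∀ j ∈ s, DifferentiableAt ℝ (A j) x) :
    pd i (fun y => ∑ j ∈ s, A j y) x = ∑ j ∈ s, pd i (A j) x := by
  simp [pd, fderiv_fun_sum h]

theorem pd_sum' {s : Finset (Fin n)} {A : Fin n → (Fin n → ℝ) → ℝ} (i : Fin n) (x : Fin n → ℝ)
    (h : ∀ j ∈ s, DifferentiableAt ℝ (A j) x) :
    pd i (fun y => ∑ j ∈ s, A j y) x = ∑ j ∈ s, pd i (A j) x := by
  simp [pd, fderiv_fun_sum h]

theorem pd_const_mul {f : (Fin n → ℝ) → ℝ} (i : Fin n) (x : Fin n → ℝ) (c : ℝ)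
    (hf : DifferentiableAt ℝ f x) :
    pd i (fun y => c * f y) x = c * pd i f x := by
  simp [pd, fderiv_const_mul hf]

theorem pd_const (i : Fin n) (c : ℝ) : pd i (fun _ => c) = fun _ => 0 := by
  funext x; simp [pd]

theorem pd_coord (i β : Fin n) (x : Fin n → ℝ) :
    pd i (fun y => y β) x = if i = β then 1 else 0 := by
  have : (fun y : Fin n → ℝ => y β) = (ContinuousLinearMap.proj β : (Fin n → ℝ) →L[ℝ] ℝ) := rfl
  rw [pd, this, ContinuousLinearMap.fderiv]
  simp [Pi.single_apply, eq_comm]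

theorem pd_comm {f : (Fin n → ℝ) → ℝ} (hf : ContDiff ℝ (⊤ : ℕ∞) f) (a b : Fin n) (x : Fin n → ℝ) :
    pd a (pd b f) x = pd b (pd a f) x := by
  have hd : ∀ y, DifferentiableAt ℝ f y := fun y => (hf.differentiable (by simp)).differentiableAt
  have hfd : ContDiff ℝ (⊤ : ℕ∞) (fderiv ℝ f) := hf.fderiv_right (by simp)
  have key : ∀ u w : Fin n → ℝ, pd (i := a) f = pd a f := fun _ _ => rfl
  have h1 : ∀ (u w : Fin n → ℝ), fderiv ℝ (fun y => fderiv ℝ f y w) x u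
      = fderiv ℝ (fderiv ℝ f) x u w := by
    intro u w
    rw [fderiv_clm_apply (hfd.differentiable (by simp)).differentiableAt (differentiableAt_const _)]
    simp
  have hsymm := (hf.contDiffAt (x := x)).isSymmSndFDerivAt (by rw [minSmoothness_of_isRCLikeNormedField]; exact WithTop.coe_le_coe.2 (le_top : (2:ℕ∞) ≤ ⊤))
  show fderiv ℝ (fun y => fderiv ℝ f y (Pi.single b 1)) x (Pi.single a 1)
      = fderiv ℝ (fun y => fderiv ℝ f y (Pi.single a 1)) x (Pi.single b 1)
  rw [h1, h1]
  exact hsymm _ _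



theorem helper1 {A : Fin n → Fin n → ℝ} {P h : Fin n → ℝ} :
    ∑ δ, (∑ ν, A δ ν * P ν) * h δ = ∑ ν, P ν * ∑ δ, h δ * A δ ν := by
  simp only [Finset.sum_mul, Finset.mul_sum]
  rw [Finset.sum_comm]
  exact Finset.sum_congr rfl fun ν _ => Finset.sum_congr rfl fun δ _ => by ring

theorem helper2 {A : Fin n → Fin n → ℝ} {P h : Fin n → ℝ} :
    ∑ γ, h γ * (∑ ν, A γ ν * P ν) = ∑ ν, P ν * ∑ γ, h γ * A γ ν := by
  simp only [Finset.sum_mul, Finset.mul_sum]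
  rw [Finset.sum_comm]
  exact Finset.sum_congr rfl fun ν _ => Finset.sum_congr rfl fun δ _ => by ring

theorem helper3 {B : Fin n → Fin n → ℝ} {g h : Fin n → ℝ} :
    ∑ δ, h δ * (∑ κ, g κ * B δ κ) = ∑ κ, g κ * ∑ δ, h δ * B δ κ := by
  simp only [Finset.sum_mul, Finset.mul_sum]
  rw [Finset.sum_comm]
  exact Finset.sum_congr rfl fun ν _ => Finset.sum_congr rfl fun δ _ => by ring

theorem sum3_reorder {f : Fin n → Fin n → Fin n → ℝ} :
    ∑ δ, ∑ ν, ∑ μ, f δ ν μ = ∑ μ, ∑ ν, ∑ δ, f δ ν μ := by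
  calc ∑ δ, ∑ ν, ∑ μ, f δ ν μ = ∑ δ, ∑ μ, ∑ ν, f δ ν μ :=
        Finset.sum_congr rfl fun δ _ => Finset.sum_comm
    _ = ∑ μ, ∑ δ, ∑ ν, f δ ν μ := Finset.sum_comm
    _ = ∑ μ, ∑ ν, ∑ δ, f δ ν μ := Finset.sum_congr rfl fun μ _ => Finset.sum_comm

section ALG

variable (c : Fin n → Fin n → Fin n → ℝ)

def Qa (a b e μ : Fin n) : ℝ := ∑ δ, c a b δ * c δ e μ

def Rfun (a b e d μ : Fin n) : ℝ := ∑ ν, Qa c a b e ν * c ν d μ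

variable {c}

theorem Qa_swap12 (hcs : ∀ a b μ, c a b μ = c b a μ) (a b e μ : Fin n) :
    Qa c a b e μ = Qa c b a e μ := by
  unfold Qa; exact Finset.sum_congr rfl fun δ _ => by rw [hcs a b]

theorem Qa_rotl (hcs : ∀ a b μ, c a b μ = c b a μ)
    (hW2 : ∀ a b e μ, ∑ γ, c a b γ * c γ e μ = ∑ γ, c a e γ * c γ b μ)
    (a b e μ : Fin n) : Qa c a b e μ = Qa c b e a μ := by
  rw [Qa_swap12 hcs]; exact hW2 b a e μ

theorem Qa_swap13 (hcs : ∀ a b μ, c a b μ = c b a μ)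
    (hW2 : ∀ a b e μ, ∑ γ, c a b γ * c γ e μ = ∑ γ, c a e γ * c γ b μ)
    (a b e μ : Fin n) : Qa c a b e μ = Qa c e b a μ := by
  rw [Qa_rotl hcs hW2, Qa_rotl hcs hW2]; exact hW2 e a b μ

theorem Qa_swap23 (hW2 : ∀ a b e μ, ∑ γ, c a b γ * c γ e μ = ∑ γ, c a e γ * c γ b μ)
    (a b e μ : Fin n) : Qa c a b e μ = Qa c a e b μ := hW2 a b e μ

theorem Rfun_swap34 (hW2 : ∀ a b e μ, ∑ γ, c a b γ * c γ e μ = ∑ γ, c a e γ * c γ b μ)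
    (a b e d μ : Fin n) : Rfun c a b e d μ = Rfun c a b d e μ := by
  unfold Rfun Qa
  simp only [Finset.sum_mul]
  rw [Finset.sum_comm]
  conv_rhs => rw [Finset.sum_comm]
  refine Finset.sum_congr rfl fun δ _ => ?_
  calc ∑ ν, c a b δ * c δ e ν * c ν d μ = c a b δ * ∑ ν, c δ e ν * c ν d μ := by
        rw [Finset.mul_sum]; exact Finset.sum_congr rfl fun ν _ => by ring
    _ = c a b δ * ∑ ν, c δ d ν * c ν e μ := by rw [hW2 δ e d μ]
    _ = ∑ ν, c a b δ * c δ d ν * c ν e μ := by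
        rw [Finset.mul_sum]; exact Finset.sum_congr rfl fun ν _ => by ring

theorem Rfun_Q (a b e a' b' e' d μ : Fin n) (h : ∀ ν, Qa c a b e ν = Qa c a' b' e' ν) :
    Rfun c a b e d μ = Rfun c a' b' e' d μ :=
  Finset.sum_congr rfl fun ν _ => by rw [h ν]

/-! ### Group A : fourth-derivative terms -/

theorem groupA {f4 : Fin n → Fin n → Fin n → Fin n → ℝ} {ηe : Fin n → Fin n → ℝ}
    {P : Fin n → ℝ}
    (hrot : ∀ a b e d, f4 a b e d = f4 d a b e)
    (hW3 : ∀ e a b c' d,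
      (∑ δ, c c' d δ * f4 e a b δ) + (∑ δ, c a b δ * f4 e δ c' d)
        = (∑ δ, c b d δ * f4 e a c' δ) + (∑ δ, c a c' δ * f4 e δ b d))
    (p q s t : Fin n) :
    ∑ δ, (∑ ν, (∑ κ, ηe ν κ * f4 p q δ κ) * P ν) * c s t δ
      + ∑ γ, c p q γ * (∑ ν, (∑ κ, ηe ν κ * f4 γ s t κ) * P ν)
    = ∑ δ, (∑ ν, (∑ κ, ηe ν κ * f4 p s δ κ) * P ν) * c q t δ
      + ∑ γ, c p s γ * (∑ ν, (∑ κ, ηe ν κ * f4 γ q t κ) * P ν) := by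
  have canon : ∀ q s t : Fin n,
      ∑ δ, (∑ ν, (∑ κ, ηe ν κ * f4 p q δ κ) * P ν) * c s t δ
        + ∑ γ, c p q γ * (∑ ν, (∑ κ, ηe ν κ * f4 γ s t κ) * P ν)
      = ∑ ν, P ν * ∑ κ, ηe ν κ *
          ((∑ δ, c s t δ * f4 κ p q δ) + (∑ δ, c p q δ * f4 κ δ s t)) := by
    intro q s t
    rw [helper1 (A := fun δ ν => ∑ κ, ηe ν κ * f4 p q δ κ) (P := P) (h := c s t),
        helper2 (A := fun γ ν => ∑ κ, ηe ν κ * f4 γ s t κ) (P := P) (h := c p q),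
        ← Finset.sum_add_distrib]
    refine Finset.sum_congr rfl fun ν _ => ?_
    rw [helper3 (B := fun δ κ => f4 p q δ κ) (g := fun κ => ηe ν κ) (h := c s t),
        helper3 (B := fun γ κ => f4 γ s t κ) (g := fun κ => ηe ν κ) (h := c p q),
        ← mul_add, ← Finset.sum_add_distrib]
    refine congrArg (P ν * ·) (Finset.sum_congr rfl fun κ _ => ?_)
    rw [← mul_add]
    refine congrArg (ηe ν κ * ·) ?_
    refine congrArg₂ (· + ·) (Finset.sum_congr rfl fun δ _ => by rw [hrot p q δ κ])
      (Finset.sum_congr rfl fun γ _ => by rw [hrot γ s t κ])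
  rw [canon q s t, canon s q t]
  refine Finset.sum_congr rfl fun ν _ => congrArg (P ν * ·)
    (Finset.sum_congr rfl fun κ _ => congrArg (ηe ν κ * ·) ?_)
  exact hW3 κ p q s t

end ALG

section ALG2
variable {c : Fin n → Fin n → Fin n → ℝ}

/-! ### Group B : N terms -/

theorem canonB1 {N : Fin n → ℝ} (hcs : ∀ a b μ, c a b μ = c b a μ) (p q s t : Fin n) :
    ∑ δ, (∑ ν, ∑ μ, c q δ ν * c p ν μ * N μ) * c s t δ
      = ∑ μ, N μ * Rfun c s t q p μ := by
  calc ∑ δ, (∑ ν, ∑ μ, c q δ ν * c p ν μ * N μ) * c s t δ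
      = ∑ δ, ∑ ν, ∑ μ, c q δ ν * c p ν μ * N μ * c s t δ := by
        simp only [Finset.sum_mul]
    _ = ∑ μ, ∑ ν, ∑ δ, c q δ ν * c p ν μ * N μ * c s t δ := sum3_reorder
    _ = ∑ μ, N μ * Rfun c s t q p μ := by
        refine Finset.sum_congr rfl fun μ _ => ?_
        unfold Rfun Qa
        simp only [Finset.mul_sum, Finset.sum_mul]
        refine Finset.sum_congr rfl fun ν _ => Finset.sum_congr rfl fun δ _ => ?_
        rw [hcs q δ, hcs p ν]; ring

theorem canonB2 {N : Fin n → ℝ} (hcs : ∀ a b μ, c a b μ = c b a μ)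
    (hW2 : ∀ a b e μ, ∑ γ, c a b γ * c γ e μ = ∑ γ, c a e γ * c γ b μ)
    (p q s t : Fin n) :
    ∑ γ, c p q γ * (∑ ν, ∑ μ, c s t ν * c γ ν μ * N μ)
      = ∑ μ, N μ * Rfun c s t p q μ := by
  calc ∑ γ, c p q γ * (∑ ν, ∑ μ, c s t ν * c γ ν μ * N μ)
      = ∑ γ, ∑ ν, ∑ μ, c p q γ * (c s t ν * c γ ν μ * N μ) := by
        simp only [Finset.mul_sum]
    _ = ∑ μ, ∑ ν, ∑ γ, c p q γ * (c s t ν * c γ ν μ * N μ) := sum3_reorder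
    _ = ∑ μ, N μ * ∑ ν, c s t ν * Qa c p q ν μ := by
        refine Finset.sum_congr rfl fun μ _ => ?_
        unfold Qa
        simp only [Finset.mul_sum]
        refine Finset.sum_congr rfl fun ν _ => Finset.sum_congr rfl fun γ _ => ?_
        ring
    _ = ∑ μ, N μ * ∑ ν, c s t ν * Qa c p ν q μ := by
        refine Finset.sum_congr rfl fun μ _ => congrArg (N μ * ·)
          (Finset.sum_congr rfl fun ν _ => congrArg (c s t ν * ·) ?_)
        exact Qa_swap23 hW2 p q ν μ
    _ = ∑ μ, N μ * Rfun c s t p q μ := by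
        refine Finset.sum_congr rfl fun μ _ => congrArg (N μ * ·) ?_
        unfold Rfun Qa
        simp only [Finset.mul_sum, Finset.sum_mul]
        rw [Finset.sum_comm]
        refine Finset.sum_congr rfl fun ν _ => Finset.sum_congr rfl fun δ _ => ?_
        rw [hcs p δ]; ring

theorem groupB {N : Fin n → ℝ} (hcs : ∀ a b μ, c a b μ = c b a μ)
    (hW2 : ∀ a b e μ, ∑ γ, c a b γ * c γ e μ = ∑ γ, c a e γ * c γ b μ)
    (p q s t : Fin n) :
    ∑ δ, (∑ ν, ∑ μ, c q δ ν * c p ν μ * N μ) * c s t δ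
      + ∑ γ, c p q γ * (∑ ν, ∑ μ, c s t ν * c γ ν μ * N μ)
    = ∑ δ, (∑ ν, ∑ μ, c s δ ν * c p ν μ * N μ) * c q t δ
      + ∑ γ, c p s γ * (∑ ν, ∑ μ, c q t ν * c γ ν μ * N μ) := by
  rw [canonB1 hcs p q s t, canonB2 hcs hW2 p q s t,
      canonB1 hcs p s q t, canonB2 hcs hW2 p s q t]
  have h1 : ∀ μ, Rfun c q t s p μ = Rfun c s t q p μ :=
    fun μ => Rfun_Q _ _ _ _ _ _ _ _ fun ν => Qa_swap13 hcs hW2 q t s ν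
  have h2 : ∀ μ, Rfun c q t p s μ = Rfun c s t p q μ := by
    intro μ
    rw [Rfun_Q q t p p t q s μ fun ν => Qa_swap13 hcs hW2 q t p ν,
        Rfun_swap34 hW2 p t q s μ,
        Rfun_Q p t s s t p q μ fun ν => Qa_swap13 hcs hW2 p t s ν]
  rw [← Finset.sum_add_distrib, ← Finset.sum_add_distrib]
  refine Finset.sum_congr rfl fun μ _ => ?_
  rw [h1 μ, h2 μ]

/-! ### Group C : T terms -/

theorem groupC {T : Fin n → Fin n → ℝ} (hcs : ∀ a b μ, c a b μ = c b a μ)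
    (hW2 : ∀ a b e μ, ∑ γ, c a b γ * c γ e μ = ∑ γ, c a e γ * c γ b μ)
    (hTa : ∀ a b, T a b = - T b a)
    (p q s t : Fin n) :
    ∑ δ, ((∑ ν, c q δ ν * T p ν) + (∑ μ, c p q μ * T δ μ) + (∑ μ, c p δ μ * T q μ)) * c s t δ
      + ∑ γ, c p q γ * ((∑ ν, c s t ν * T γ ν) + (∑ μ, c γ s μ * T t μ) + (∑ μ, c γ t μ * T s μ))
    = ∑ δ, ((∑ ν, c s δ ν * T p ν) + (∑ μ, c p s μ * T δ μ) + (∑ μ, c p δ μ * T s μ)) * c q t δ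
      + ∑ γ, c p s γ * ((∑ ν, c q t ν * T γ ν) + (∑ μ, c γ q μ * T t μ) + (∑ μ, c γ t μ * T q μ)) := by
  have cancel : ∀ q s t : Fin n,
      ∑ δ, (∑ μ, c p q μ * T δ μ) * c s t δ + ∑ γ, c p q γ * (∑ ν, c s t ν * T γ ν) = 0 := by
    intro q s t
    have e1 : ∑ δ, (∑ μ, c p q μ * T δ μ) * c s t δ
        = ∑ δ, ∑ μ, c s t δ * c p q μ * T δ μ := by
      simp only [Finset.sum_mul]
      exact Finset.sum_congr rfl fun δ _ => Finset.sum_congr rfl fun μ _ => by ring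
    have e2 : ∑ γ, c p q γ * (∑ ν, c s t ν * T γ ν)
        = ∑ δ, ∑ μ, c s t δ * c p q μ * T μ δ := by
      simp only [Finset.mul_sum]
      rw [Finset.sum_comm]
      exact Finset.sum_congr rfl fun δ _ => Finset.sum_congr rfl fun μ _ => by ring
    rw [e1, e2, ← Finset.sum_add_distrib]
    refine Finset.sum_eq_zero fun δ _ => ?_
    rw [← Finset.sum_add_distrib]
    refine Finset.sum_eq_zero fun μ _ => ?_
    rw [hTa μ δ]; ring
  have canonC1 : ∀ q s t : Fin n, ∑ δ, (∑ ν, c q δ ν * T p ν) * c s t δ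
      = ∑ ν, T p ν * Qa c s t q ν := by
    intro q s t
    rw [helper1 (A := fun δ ν => c q δ ν) (P := T p) (h := c s t)]
    refine Finset.sum_congr rfl fun ν _ => congrArg (T p ν * ·) ?_
    exact Finset.sum_congr rfl fun δ _ => by rw [hcs q δ]
  have canonC3 : ∀ q s t : Fin n, ∑ δ, (∑ μ, c p δ μ * T q μ) * c s t δ
      = ∑ μ, T q μ * Qa c s t p μ := by
    intro q s t
    rw [helper1 (A := fun δ μ => c p δ μ) (P := T q) (h := c s t)]
    refine Finset.sum_congr rfl fun μ _ => congrArg (T q μ * ·) ?_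
    exact Finset.sum_congr rfl fun δ _ => by rw [hcs p δ]
  have canonC5 : ∀ q s t : Fin n, ∑ γ, c p q γ * (∑ μ, c γ s μ * T t μ)
      = ∑ μ, T t μ * Qa c p q s μ := by
    intro q s t
    rw [helper2 (A := fun γ μ => c γ s μ) (P := T t) (h := c p q)]
    rfl
  have canonC6 : ∀ q s t : Fin n, ∑ γ, c p q γ * (∑ μ, c γ t μ * T s μ)
      = ∑ μ, T s μ * Qa c p q t μ := by
    intro q s t
    rw [helper2 (A := fun γ μ => c γ t μ) (P := T s) (h := c p q)]
    rfl
  have M1 : ∑ ν, T p ν * Qa c s t q ν = ∑ ν, T p ν * Qa c q t s ν :=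
    Finset.sum_congr rfl fun ν _ => by rw [Qa_swap13 hcs hW2 s t q ν]
  have M2 : ∑ μ, T q μ * Qa c s t p μ = ∑ μ, T q μ * Qa c p s t μ :=
    Finset.sum_congr rfl fun μ _ => by
      rw [Qa_rotl hcs hW2 s t p μ, Qa_rotl hcs hW2 t p s μ]
  have M3 : ∑ μ, T t μ * Qa c p q s μ = ∑ μ, T t μ * Qa c p s q μ :=
    Finset.sum_congr rfl fun μ _ => by rw [Qa_swap23 hW2 p q s μ]
  have M4 : ∑ μ, T s μ * Qa c p q t μ = ∑ μ, T s μ * Qa c q t p μ :=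
    Finset.sum_congr rfl fun μ _ => by rw [Qa_rotl hcs hW2 p q t μ]
  simp only [add_mul, mul_add, Finset.sum_add_distrib]
  have L1 := canonC1 q s t; have L3 := canonC3 q s t
  have L5 := canonC5 q s t; have L6 := canonC6 q s t
  have R1 := canonC1 s q t; have R3 := canonC3 s q t
  have R5 := canonC5 s q t; have R6 := canonC6 s q t
  have CL := cancel q s t; have CR := cancel s q t
  linarith [M1, M2, M3, M4]

end ALG2

section ALG3
variable (c : Fin n → Fin n → Fin n → ℝ) (f4 : Fin n → Fin n → Fin n → Fin n → ℝ)
  (ηe : Fin n → Fin n → ℝ) (P N : Fin n → ℝ) (T : Fin n → Fin n → ℝ)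

/-- abstract form of the third derivative of `G`. -/
def Dex (a b e : Fin n) : ℝ :=
  (∑ ν, (∑ κ, ηe ν κ * f4 a b e κ) * P ν)
  + (∑ ν, ∑ μ, c b e ν * c a ν μ * N μ)
  + ((∑ ν, c b e ν * T a ν) + (∑ μ, c a b μ * T e μ) + (∑ μ, c a e μ * T b μ))

theorem ALG_main
    (hcs : ∀ a b μ, c a b μ = c b a μ)
    (hW2 : ∀ a b e μ, ∑ γ, c a b γ * c γ e μ = ∑ γ, c a e γ * c γ b μ)
    (hrot : ∀ a b e d, f4 a b e d = f4 d a b e)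
    (hW3 : ∀ e a b c' d,
      (∑ δ, c c' d δ * f4 e a b δ) + (∑ δ, c a b δ * f4 e δ c' d)
        = (∑ δ, c b d δ * f4 e a c' δ) + (∑ δ, c a c' δ * f4 e δ b d))
    (hTa : ∀ a b, T a b = - T b a)
    (p q s t : Fin n) :
    ∑ δ, Dex c f4 ηe P N T p q δ * c s t δ + ∑ γ, c p q γ * Dex c f4 ηe P N T γ s t
    = ∑ δ, Dex c f4 ηe P N T p s δ * c q t δ + ∑ γ, c p s γ * Dex c f4 ηe P N T γ q t := by
  have hA := groupA (c := c) (f4 := f4) (ηe := ηe) (P := P) hrot hW3 p q s t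
  have hB := groupB (c := c) (N := N) hcs hW2 p q s t
  have hC := groupC (c := c) (T := T) hcs hW2 hTa p q s t
  simp only [Dex, add_mul, mul_add, Finset.sum_add_distrib] at *
  linarith

end ALG3


theorem pd_sub {f g : (Fin n → ℝ) → ℝ} (i : Fin n) (x : Fin n → ℝ)
    (hf : DifferentiableAt ℝ f x) (hg : DifferentiableAt ℝ g x) :
    pd i (fun y => f y - g y) x = pd i f x - pd i g x := by
  simp [pd, fderiv_fun_sub hf hg]

section Deriv

variable {F : (Fin n → ℝ) → ℝ} (hF : ContDiff ℝ (⊤ : ℕ∞) F)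
include hF

/-- the matrix of "structure constants" `c^μ_{ab} = η^{μκ} ∂_a∂_b∂_κ F`. -/
noncomputable def cmf (η : Matrix (Fin n) (Fin n) ℝ) (F : (Fin n → ℝ) → ℝ) (a b μ : Fin n) :
    (Fin n → ℝ) → ℝ :=
  fun x => ∑ κ, η μ κ * pd a (pd b (pd κ F)) x

theorem contDiff_c3 (a b e : Fin n) : ContDiff ℝ (⊤ : ℕ∞) (pd a (pd b (pd e F))) :=
  contDiff_pd a (contDiff_pd b (contDiff_pd e hF))

theorem contDiff_cmf (η : Matrix (Fin n) (Fin n) ℝ) (a b μ : Fin n) :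
    ContDiff ℝ (⊤ : ℕ∞) (cmf η F a b μ) := by
  unfold cmf
  exact ContDiff.sum fun κ _ => contDiff_const.mul (contDiff_c3 hF a b κ)

/-- symmetry of third derivatives : swap the first two. -/
theorem c3_swap12 (a b e : Fin n) (x : Fin n → ℝ) :
    pd a (pd b (pd e F)) x = pd b (pd a (pd e F)) x :=
  pd_comm (contDiff_pd e hF) a b x

/-- symmetry of third derivatives : swap the last two. -/
theorem c3_swap23 (a b e : Fin n) (x : Fin n → ℝ) :
    pd a (pd b (pd e F)) x = pd a (pd e (pd b F)) x := by
  have : pd b (pd e F) = pd e (pd b F) := funext (pd_comm hF b e)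
  rw [this]

/-- rotation of third derivatives. -/
theorem c3_rot (a b e : Fin n) (x : Fin n → ℝ) :
    pd a (pd b (pd e F)) x = pd b (pd e (pd a F)) x := by
  rw [c3_swap12 hF, c3_swap23 hF]

/-- rotation of fourth derivatives : bring the last index to the front. -/
theorem c4_rot (a b e d : Fin n) (x : Fin n → ℝ) :
    pd a (pd b (pd e (pd d F))) x = pd d (pd a (pd b (pd e F))) x := by
  have h1 : pd e (pd d F) = pd d (pd e F) := funext (pd_comm hF e d)
  have h2 : pd b (pd d (pd e F)) = pd d (pd b (pd e F)) :=
    funext (pd_comm (contDiff_pd e hF) b d)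
  rw [h1, h2]
  exact pd_comm (contDiff_pd b (contDiff_pd e hF)) a d x

theorem cmf_symm (η : Matrix (Fin n) (Fin n) ℝ) (a b μ : Fin n) (x : Fin n → ℝ) :
    cmf η F a b μ x = cmf η F b a μ x :=
  Finset.sum_congr rfl fun κ _ => by rw [c3_swap12 hF a b κ x]

theorem pd_cmf (η : Matrix (Fin n) (Fin n) ℝ) (p a b μ : Fin n) (x : Fin n → ℝ) :
    pd p (cmf η F a b μ) x = ∑ κ, η μ κ * pd p (pd a (pd b (pd κ F))) x := by
  unfold cmf
  rw [pd_sum' p x fun κ _ => ((contDiff_const.mul (contDiff_c3 hF a b κ)).differentiable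
    (by simp)).differentiableAt]
  exact Finset.sum_congr rfl fun κ _ => pd_const_mul p x _
    (((contDiff_c3 hF a b κ).differentiable (by simp)).differentiableAt)

end Deriv

section WDVV

variable {η : Matrix (Fin n) (Fin n) ℝ} {F : (Fin n → ℝ) → ℝ}
variable (hF : ContDiff ℝ (⊤ : ℕ∞) F) (hηsymm : ∀ α β, η α β = η β α)
variable (hWDVV : ∀ α β ν ρ, ∀ x : Fin n → ℝ,
      ∑ δ, ∑ γ, pd α (pd β (pd δ F)) x * η δ γ * pd γ (pd ν (pd ρ F)) x
        = ∑ δ, ∑ γ, pd α (pd ν (pd δ F)) x * η δ γ * pd γ (pd β (pd ρ F)) x)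
include hηsymm

theorem canonW (a b e d : Fin n) (x : Fin n → ℝ) :
    ∑ γ, cmf η F a b γ x * pd γ (pd e (pd d F)) x
      = ∑ δ, ∑ γ, pd a (pd b (pd δ F)) x * η δ γ * pd γ (pd e (pd d F)) x := by
  unfold cmf
  simp only [Finset.sum_mul]
  rw [Finset.sum_comm]
  exact Finset.sum_congr rfl fun δ _ => Finset.sum_congr rfl fun γ _ => by
    rw [hηsymm γ δ]; ring

include hWDVV in
theorem W1 (a b e d : Fin n) (x : Fin n → ℝ) :
    ∑ γ, cmf η F a b γ x * pd γ (pd e (pd d F)) x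
      = ∑ γ, cmf η F a e γ x * pd γ (pd b (pd d F)) x := by
  rw [canonW hηsymm, canonW hηsymm]
  exact hWDVV a b e d x

include hWDVV in
theorem W2pt (a b e μ : Fin n) (x : Fin n → ℝ) :
    ∑ γ, cmf η F a b γ x * cmf η F γ e μ x = ∑ γ, cmf η F a e γ x * cmf η F γ b μ x := by
  have canon2 : ∀ a b e : Fin n, ∑ γ, cmf η F a b γ x * cmf η F γ e μ x
      = ∑ d, η μ d * ∑ γ, cmf η F a b γ x * pd γ (pd e (pd d F)) x := by
    intro a b e
    calc ∑ γ, cmf η F a b γ x * cmf η F γ e μ x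
        = ∑ γ, ∑ d, η μ d * (cmf η F a b γ x * pd γ (pd e (pd d F)) x) := by
          refine Finset.sum_congr rfl fun γ _ => ?_
          rw [show cmf η F γ e μ x = ∑ d, η μ d * pd γ (pd e (pd d F)) x from rfl,
            Finset.mul_sum]
          exact Finset.sum_congr rfl fun d _ => by ring
      _ = ∑ d, ∑ γ, η μ d * (cmf η F a b γ x * pd γ (pd e (pd d F)) x) := Finset.sum_comm
      _ = ∑ d, η μ d * ∑ γ, cmf η F a b γ x * pd γ (pd e (pd d F)) x :=
          Finset.sum_congr rfl fun d _ => (Finset.mul_sum _ _ _).symm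
  rw [canon2 a b e, canon2 a e b]
  exact Finset.sum_congr rfl fun d _ => by rw [W1 hηsymm hWDVV a b e d x]

include hF in
theorem canon3 (a b e' d e : Fin n) (x : Fin n → ℝ) :
    pd e (fun y => ∑ γ, cmf η F a b γ y * pd γ (pd e' (pd d F)) y) x
      = (∑ δ, cmf η F e' d δ x * pd e (pd a (pd b (pd δ F))) x)
        + (∑ δ, cmf η F a b δ x * pd e (pd δ (pd e' (pd d F))) x) := by
  have hdm : ∀ γ : Fin n, DifferentiableAt ℝ (cmf η F a b γ) x :=
    fun γ => ((contDiff_cmf hF η a b γ).differentiable (by simp)).differentiableAt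
  have hdc : ∀ γ : Fin n, DifferentiableAt ℝ (pd γ (pd e' (pd d F))) x :=
    fun γ => ((contDiff_c3 hF γ e' d).differentiable (by simp)).differentiableAt
  rw [pd_sum' (A := fun γ y => cmf η F a b γ y * pd γ (pd e' (pd d F)) y) e x fun γ _ => ((hdm γ).mul (hdc γ))]
  have step : ∀ γ : Fin n, pd e (fun y => cmf η F a b γ y * pd γ (pd e' (pd d F)) y) x
      = pd e (cmf η F a b γ) x * pd γ (pd e' (pd d F)) x
        + cmf η F a b γ x * pd e (pd γ (pd e' (pd d F))) x :=
    fun γ => pd_mul e x (hdm γ) (hdc γ)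
  rw [Finset.sum_congr rfl fun γ _ => step γ, Finset.sum_add_distrib]
  congr 1
  -- first piece : reorder the η-contraction
  calc ∑ γ, pd e (cmf η F a b γ) x * pd γ (pd e' (pd d F)) x
      = ∑ γ, ∑ κ, η γ κ * pd e (pd a (pd b (pd κ F))) x * pd γ (pd e' (pd d F)) x := by
        refine Finset.sum_congr rfl fun γ _ => ?_
        rw [pd_cmf hF η e a b γ x, Finset.sum_mul]
    _ = ∑ κ, ∑ γ, η γ κ * pd e (pd a (pd b (pd κ F))) x * pd γ (pd e' (pd d F)) x :=
        Finset.sum_comm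
    _ = ∑ δ, cmf η F e' d δ x * pd e (pd a (pd b (pd δ F))) x := by
        refine Finset.sum_congr rfl fun κ _ => ?_
        rw [show cmf η F e' d κ x = ∑ γ, η κ γ * pd e' (pd d (pd γ F)) x from rfl,
          Finset.sum_mul]
        refine Finset.sum_congr rfl fun γ _ => ?_
        rw [hηsymm γ κ, c3_rot hF γ e' d x]; ring

include hF hWDVV in
theorem W3pt (e a b c' d : Fin n) (x : Fin n → ℝ) :
    (∑ δ, cmf η F c' d δ x * pd e (pd a (pd b (pd δ F))) x)
      + (∑ δ, cmf η F a b δ x * pd e (pd δ (pd c' (pd d F))) x)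
    = (∑ δ, cmf η F b d δ x * pd e (pd a (pd c' (pd δ F))) x)
      + (∑ δ, cmf η F a c' δ x * pd e (pd δ (pd b (pd d F))) x) := by
  have hfun : (fun y => ∑ γ, cmf η F a b γ y * pd γ (pd c' (pd d F)) y)
      = (fun y => ∑ γ, cmf η F a c' γ y * pd γ (pd b (pd d F)) y) :=
    funext fun y => W1 hηsymm hWDVV a b c' d y
  have := congrFun (congrArg (pd e) hfun) x
  rwa [canon3 hF hηsymm a b c' d e x, canon3 hF hηsymm a c' b d e x] at this

end WDVV

section Hier

variable {η : Matrix (Fin n) (Fin n) ℝ} {F : (Fin n → ℝ) → ℝ}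
  {v : ℕ → Fin n → (Fin n → ℝ) → ℝ} {k : ℕ}

noncomputable def Gf (v : ℕ → Fin n → (Fin n → ℝ) → ℝ) (α β : Fin n) (k : ℕ) :
    (Fin n → ℝ) → ℝ :=
  fun y => ∑ j ∈ Finset.range (k + 1), (-1 : ℝ) ^ j * v j α y * v (k - j) β y

noncomputable def Pf (v : ℕ → Fin n → (Fin n → ℝ) → ℝ) (α β : Fin n) (k : ℕ) (ν : Fin n) :
    (Fin n → ℝ) → ℝ :=
  fun x => ∑ j ∈ Finset.range k, (-1 : ℝ) ^ j *
    (v j α x * pd ν (v (k - 1 - j) β) x - pd ν (v j α) x * v (k - 1 - j) β x)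

noncomputable def Sf (v : ℕ → Fin n → (Fin n → ℝ) → ℝ) (α β : Fin n) (k : ℕ) (q r : Fin n) :
    (Fin n → ℝ) → ℝ :=
  fun x => ∑ j ∈ Finset.range (k + 1), (-1 : ℝ) ^ j *
    (pd q (v j α) x * pd r (v (k - j) β) x + pd r (v j α) x * pd q (v (k - j) β) x)

noncomputable def Nf (v : ℕ → Fin n → (Fin n → ℝ) → ℝ) (α β : Fin n) (k : ℕ) (μ : Fin n) :
    (Fin n → ℝ) → ℝ :=
  fun x => ∑ j ∈ Finset.range (k - 1), (-1 : ℝ) ^ j *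
    (pd μ (v j α) x * v (k - 2 - j) β x + v j α x * pd μ (v (k - 2 - j) β) x)

noncomputable def Tf (v : ℕ → Fin n → (Fin n → ℝ) → ℝ) (α β : Fin n) (k : ℕ) (p ν : Fin n) :
    (Fin n → ℝ) → ℝ :=
  fun x => ∑ j ∈ Finset.range k, (-1 : ℝ) ^ j *
    (pd p (v j α) x * pd ν (v (k - 1 - j) β) x - pd ν (v j α) x * pd p (v (k - 1 - j) β) x)

variable (hv : ∀ j ≤ k, ∀ β, ContDiff ℝ (⊤ : ℕ∞) (v j β))
include hv

theorem contDiff_Pf (α β ν : Fin n) : ContDiff ℝ (⊤ : ℕ∞) (Pf v α β k ν) := by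
  refine ContDiff.sum fun j hj => ?_
  have hj' : j ≤ k := by simp at hj; omega
  exact contDiff_const.mul (((hv j hj' α).mul (contDiff_pd ν (hv (k - 1 - j) (by omega) β))).sub
    ((contDiff_pd ν (hv j hj' α)).mul (hv (k - 1 - j) (by omega) β)))

theorem contDiff_Sf (α β q r : Fin n) : ContDiff ℝ (⊤ : ℕ∞) (Sf v α β k q r) := by
  refine ContDiff.sum fun j hj => ?_
  have hj' : j ≤ k := by simp at hj; omega
  exact contDiff_const.mul
    (((contDiff_pd q (hv j hj' α)).mul (contDiff_pd r (hv (k - j) (by omega) β))).add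
      ((contDiff_pd r (hv j hj' α)).mul (contDiff_pd q (hv (k - j) (by omega) β))))

omit hv

theorem Tf_antisymm (α β : Fin n) (p ν : Fin n) (x : Fin n → ℝ) :
    Tf v α β k p ν x = - Tf v α β k ν p x := by
  unfold Tf
  rw [eq_neg_iff_add_eq_zero, ← Finset.sum_add_distrib]
  exact Finset.sum_eq_zero fun j _ => by ring

theorem pd2_v0 (hv0 : ∀ β, ∀ x : Fin n → ℝ, v 0 β x = x β) (β' p q : Fin n) (x : Fin n → ℝ) :
    pd p (pd q (v 0 β')) x = 0 := by
  have h : v 0 β' = fun y => y β' := funext (hv0 β')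
  have h2 : pd q (v 0 β') = fun _ => if q = β' then 1 else 0 := by
    rw [h]; exact funext (pd_coord q β')
  rw [h2]
  exact congrFun (pd_const p _) x

theorem hrec1 (hF : ContDiff ℝ (⊤ : ℕ∞) F)
    (hv0 : ∀ β, ∀ x : Fin n → ℝ, v 0 β x = x β)
    (hv1 : 1 ≤ k → ∀ β, ∀ x : Fin n → ℝ, v 1 β x = ∑ ν, η β ν * pd ν F x)
    (hvrec : ∀ j, 2 ≤ j → j ≤ k → ∀ α β γ, ∀ x : Fin n → ℝ,
      pd α (pd γ (v j β)) x
        = ∑ ν, ∑ κ, η ν κ * pd α (pd γ (pd κ F)) x * pd ν (v (j - 1) β) x)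
    (j : ℕ) (hj1 : 1 ≤ j) (hjk : j ≤ k) (p q β' : Fin n) (x : Fin n → ℝ) :
    pd p (pd q (v j β')) x = ∑ ν, cmf η F p q ν x * pd ν (v (j - 1) β') x := by
  rcases eq_or_lt_of_le hj1 with h1 | h2
  · -- j = 1
    subst h1
    have hk1 : 1 ≤ k := hjk
    have hfun : v 1 β' = fun y => ∑ ν, η β' ν * pd ν F y := funext (hv1 hk1 β')
    have hdF : ∀ (ν : Fin n) (y : Fin n → ℝ), DifferentiableAt ℝ (pd ν F) y :=
      fun ν y => ((contDiff_pd ν hF).differentiable (by simp)).differentiableAt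
    have step1 : pd q (v 1 β') = fun y => ∑ ν, η β' ν * pd q (pd ν F) y := by
      funext y
      rw [hfun, pd_sum' q y fun ν _ => (hdF ν y).const_mul (η β' ν)]
      exact Finset.sum_congr rfl fun ν _ => pd_const_mul q y _ (hdF ν y)
    have step2 : pd p (pd q (v 1 β')) x = ∑ ν, η β' ν * pd p (pd q (pd ν F)) x := by
      rw [step1, pd_sum' p x fun ν _ =>
        (((contDiff_pd q (contDiff_pd ν hF)).differentiable (by simp)).differentiableAt).const_mul
          (η β' ν)]
      exact Finset.sum_congr rfl fun ν _ => pd_const_mul p x _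
        (((contDiff_pd q (contDiff_pd ν hF)).differentiable (by simp)).differentiableAt)
    have hcoord : ∀ ν : Fin n, pd ν (v 0 β') x = if ν = β' then 1 else 0 := fun ν => by
      rw [show v 0 β' = fun y => y β' from funext (hv0 β')]; exact pd_coord ν β' x
    rw [step2]
    symm
    calc ∑ ν, cmf η F p q ν x * pd ν (v (1 - 1) β') x
        = ∑ ν, cmf η F p q ν x * (if ν = β' then 1 else 0) :=
          Finset.sum_congr rfl fun ν _ => by rw [show (1:ℕ) - 1 = 0 from rfl, hcoord ν]
      _ = cmf η F p q β' x := by simp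
      _ = ∑ ν, η β' ν * pd p (pd q (pd ν F)) x := rfl
  · -- 2 ≤ j
    rw [hvrec j h2 hjk p β' q x]
    exact Finset.sum_congr rfl fun ν _ => by
      rw [show cmf η F p q ν x = ∑ κ, η ν κ * pd p (pd q (pd κ F)) x from rfl, Finset.sum_mul]

end Hier

section Hier2

variable {η : Matrix (Fin n) (Fin n) ℝ} {F : (Fin n → ℝ) → ℝ}
  {v : ℕ → Fin n → (Fin n → ℝ) → ℝ} {k : ℕ}
variable (hF : ContDiff ℝ (⊤ : ℕ∞) F)
  (hv : ∀ j ≤ k, ∀ β, ContDiff ℝ (⊤ : ℕ∞) (v j β))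
  (hv0 : ∀ β, ∀ x : Fin n → ℝ, v 0 β x = x β)
  (hv1 : 1 ≤ k → ∀ β, ∀ x : Fin n → ℝ, v 1 β x = ∑ ν, η β ν * pd ν F x)
  (hvrec : ∀ j, 2 ≤ j → j ≤ k → ∀ α β γ, ∀ x : Fin n → ℝ,
      pd α (pd γ (v j β)) x
        = ∑ ν, ∑ κ, η ν κ * pd α (pd γ (pd κ F)) x * pd ν (v (j - 1) β) x)
include hF hv hv0 hv1 hvrec

theorem L2 (α β q r : Fin n) (x : Fin n → ℝ) :
    pd q (pd r (Gf v α β k)) x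
      = ∑ ν, cmf η F q r ν x * Pf v α β k ν x + Sf v α β k q r x := by
  have dv : ∀ j, j ≤ k → ∀ (β' : Fin n) (y : Fin n → ℝ), DifferentiableAt ℝ (v j β') y :=
    fun j hj β' y => ((hv j hj β').differentiable (by simp)).differentiableAt
  have dpv : ∀ (i : Fin n) (j : ℕ), j ≤ k → ∀ (β' : Fin n) (y : Fin n → ℝ),
      DifferentiableAt ℝ (pd i (v j β')) y :=
    fun i j hj β' y => ((contDiff_pd i (hv j hj β')).differentiable (by simp)).differentiableAt
  have memle : ∀ j ∈ Finset.range (k + 1), j ≤ k := fun j hj => by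
    simp only [Finset.mem_range] at hj; omega
  -- first derivative
  have step_r : pd r (Gf v α β k) = fun y => ∑ j ∈ Finset.range (k + 1),
      (-1 : ℝ) ^ j * (pd r (v j α) y * v (k - j) β y + v j α y * pd r (v (k - j) β) y) := by
    funext y
    unfold Gf
    rw [pd_sum (A := fun j y => (-1 : ℝ) ^ j * v j α y * v (k - j) β y) r y fun j hj =>
      ((dv j (memle j hj) α y).const_mul ((-1 : ℝ) ^ j)).mul (dv (k - j) (Nat.sub_le k j) β y)]
    refine Finset.sum_congr rfl fun j hj => ?_
    have hjk := memle j hj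
    rw [pd_mul r y ((dv j hjk α y).const_mul ((-1 : ℝ) ^ j)) (dv (k - j) (Nat.sub_le k j) β y),
      pd_const_mul r y _ (dv j hjk α y)]
    ring
  -- second derivative, term by term
  have step_q : pd q (pd r (Gf v α β k)) x = ∑ j ∈ Finset.range (k + 1), (-1 : ℝ) ^ j *
      ((pd q (pd r (v j α)) x * v (k - j) β x + pd r (v j α) x * pd q (v (k - j) β) x)
        + (pd q (v j α) x * pd r (v (k - j) β) x + v j α x * pd q (pd r (v (k - j) β)) x)) := by
    rw [step_r]
    rw [pd_sum (A := fun j y => (-1 : ℝ) ^ j * (pd r (v j α) y * v (k - j) β y + v j α y * pd r (v (k - j) β) y)) q x fun j hj =>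
      (((dpv r j (memle j hj) α x).mul (dv (k - j) (Nat.sub_le k j) β x)).add
        ((dv j (memle j hj) α x).mul (dpv r (k - j) (Nat.sub_le k j) β x))).const_mul
          ((-1 : ℝ) ^ j)]
    refine Finset.sum_congr rfl fun j hj => ?_
    have hjk := memle j hj
    rw [pd_const_mul (f := fun y => pd r (v j α) y * v (k - j) β y + v j α y * pd r (v (k - j) β) y) q x _ (((dpv r j hjk α x).mul (dv (k - j) (Nat.sub_le k j) β x)).add
        ((dv j hjk α x).mul (dpv r (k - j) (Nat.sub_le k j) β x))),
      pd_add (f := fun y => pd r (v j α) y * v (k - j) β y) (g := fun y => v j α y * pd r (v (k - j) β) y) q x ((dpv r j hjk α x).mul (dv (k - j) (Nat.sub_le k j) β x))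
        ((dv j hjk α x).mul (dpv r (k - j) (Nat.sub_le k j) β x)),
      pd_mul q x (dpv r j hjk α x) (dv (k - j) (Nat.sub_le k j) β x),
      pd_mul q x (dv j hjk α x) (dpv r (k - j) (Nat.sub_le k j) β x)]
  -- split into three pieces
  have split : ∑ j ∈ Finset.range (k + 1), (-1 : ℝ) ^ j *
      ((pd q (pd r (v j α)) x * v (k - j) β x + pd r (v j α) x * pd q (v (k - j) β) x)
        + (pd q (v j α) x * pd r (v (k - j) β) x + v j α x * pd q (pd r (v (k - j) β)) x))
      = (∑ j ∈ Finset.range (k + 1), (-1 : ℝ) ^ j * (pd q (pd r (v j α)) x * v (k - j) β x))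
        + (∑ j ∈ Finset.range (k + 1), (-1 : ℝ) ^ j * (v j α x * pd q (pd r (v (k - j) β)) x))
        + Sf v α β k q r x := by
    unfold Sf
    rw [← Finset.sum_add_distrib, ← Finset.sum_add_distrib]
    exact Finset.sum_congr rfl fun j _ => by ring
  -- piece A1
  have hA1 : ∑ j ∈ Finset.range (k + 1), (-1 : ℝ) ^ j * (pd q (pd r (v j α)) x * v (k - j) β x)
      = ∑ i ∈ Finset.range k, (-1 : ℝ) ^ (i + 1) *
          ((∑ ν, cmf η F q r ν x * pd ν (v i α) x) * v (k - 1 - i) β x) := by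
    rw [Finset.sum_range_succ']
    have h0 : (-1 : ℝ) ^ (0 : ℕ) * (pd q (pd r (v 0 α)) x * v (k - 0) β x) = 0 := by
      rw [pd2_v0 hv0 α q r x]; ring
    rw [h0, add_zero]
    refine Finset.sum_congr rfl fun i hi => ?_
    have hik : i < k := Finset.mem_range.mp hi
    rw [hrec1 hF hv0 hv1 hvrec (i + 1) (by omega) (by omega) q r α x,
      show i + 1 - 1 = i from rfl, show k - (i + 1) = k - 1 - i by omega]
  -- piece A4
  have hA4 : ∑ j ∈ Finset.range (k + 1), (-1 : ℝ) ^ j * (v j α x * pd q (pd r (v (k - j) β)) x)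
      = ∑ j ∈ Finset.range k, (-1 : ℝ) ^ j *
          (v j α x * (∑ ν, cmf η F q r ν x * pd ν (v (k - 1 - j) β) x)) := by
    rw [Finset.sum_range_succ]
    have h0 : (-1 : ℝ) ^ k * (v k α x * pd q (pd r (v (k - k) β)) x) = 0 := by
      rw [show k - k = 0 by omega, pd2_v0 hv0 β q r x]; ring
    rw [h0, add_zero]
    refine Finset.sum_congr rfl fun j hj => ?_
    have hjk : j < k := Finset.mem_range.mp hj
    rw [hrec1 hF hv0 hv1 hvrec (k - j) (by omega) (by omega) q r β x,
      show k - j - 1 = k - 1 - j by omega]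
  -- combine A1 + A4 into the P-term
  have hcomb : (∑ i ∈ Finset.range k, (-1 : ℝ) ^ (i + 1) *
        ((∑ ν, cmf η F q r ν x * pd ν (v i α) x) * v (k - 1 - i) β x))
      + (∑ j ∈ Finset.range k, (-1 : ℝ) ^ j *
        (v j α x * (∑ ν, cmf η F q r ν x * pd ν (v (k - 1 - j) β) x)))
      = ∑ ν, cmf η F q r ν x * Pf v α β k ν x := by
    rw [← Finset.sum_add_distrib]
    symm
    calc ∑ ν, cmf η F q r ν x * Pf v α β k ν x
        = ∑ ν, ∑ j ∈ Finset.range k, cmf η F q r ν x * ((-1 : ℝ) ^ j *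
            (v j α x * pd ν (v (k - 1 - j) β) x - pd ν (v j α) x * v (k - 1 - j) β x)) := by
          refine Finset.sum_congr rfl fun ν _ => ?_
          unfold Pf
          rw [Finset.mul_sum]
      _ = ∑ j ∈ Finset.range k, ∑ ν, cmf η F q r ν x * ((-1 : ℝ) ^ j *
            (v j α x * pd ν (v (k - 1 - j) β) x - pd ν (v j α) x * v (k - 1 - j) β x)) :=
          Finset.sum_comm
      _ = ∑ j ∈ Finset.range k, ((-1 : ℝ) ^ (j + 1) *
            ((∑ ν, cmf η F q r ν x * pd ν (v j α) x) * v (k - 1 - j) β x)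
          + (-1 : ℝ) ^ j *
            (v j α x * (∑ ν, cmf η F q r ν x * pd ν (v (k - 1 - j) β) x))) := by
          refine Finset.sum_congr rfl fun j _ => ?_
          rw [Finset.sum_mul, Finset.mul_sum, Finset.mul_sum, Finset.mul_sum,
            ← Finset.sum_add_distrib]
          exact Finset.sum_congr rfl fun ν _ => by ring
  rw [step_q, split, hA1, hA4, hcomb]

theorem L3 (α β p ν : Fin n) (x : Fin n → ℝ) :
    pd p (Pf v α β k ν) x
      = ∑ μ, cmf η F p ν μ x * Nf v α β k μ x + Tf v α β k p ν x := by
  have dv : ∀ j, j ≤ k → ∀ (β' : Fin n) (y : Fin n → ℝ), DifferentiableAt ℝ (v j β') y :=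
    fun j hj β' y => ((hv j hj β').differentiable (by simp)).differentiableAt
  have dpv : ∀ (i : Fin n) (j : ℕ), j ≤ k → ∀ (β' : Fin n) (y : Fin n → ℝ),
      DifferentiableAt ℝ (pd i (v j β')) y :=
    fun i j hj β' y => ((contDiff_pd i (hv j hj β')).differentiable (by simp)).differentiableAt
  rcases Nat.eq_zero_or_pos k with hk0 | hkpos
  · subst hk0
    have hPf : Pf v α β 0 ν = fun _ => (0 : ℝ) := by
      funext y; unfold Pf; simp
    have hNf : ∀ μ, Nf v α β 0 μ x = 0 := by intro μ; unfold Nf; simp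
    have hTf : Tf v α β 0 p ν x = 0 := by unfold Tf; simp
    rw [hPf, hTf, congrFun (pd_const p 0) x]
    simp [hNf]
  obtain ⟨m, rfl⟩ : ∃ m, k = m + 1 := ⟨k - 1, by omega⟩
  have memle : ∀ j ∈ Finset.range (m + 1), j ≤ m + 1 := fun j hj => by
    simp only [Finset.mem_range] at hj; omega
  -- expand the derivative of Pf
  have step : pd p (Pf v α β (m + 1) ν) x = ∑ j ∈ Finset.range (m + 1), (-1 : ℝ) ^ j *
      ((pd p (v j α) x * pd ν (v (m - j) β) x + v j α x * pd p (pd ν (v (m - j) β)) x)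
        - (pd p (pd ν (v j α)) x * v (m - j) β x + pd ν (v j α) x * pd p (v (m - j) β) x)) := by
    have hPf : Pf v α β (m + 1) ν = fun y => ∑ j ∈ Finset.range (m + 1), (-1 : ℝ) ^ j *
        (v j α y * pd ν (v (m - j) β) y - pd ν (v j α) y * v (m - j) β y) := by
      funext y; unfold Pf; simp only [Nat.add_sub_cancel]
    rw [hPf]
    rw [pd_sum (A := fun j y => (-1 : ℝ) ^ j * (v j α y * pd ν (v (m - j) β) y - pd ν (v j α) y * v (m - j) β y)) p x fun j hj =>
      (((dv j (memle j hj) α x).mul (dpv ν (m - j) (by omega) β x)).sub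
        ((dpv ν j (memle j hj) α x).mul (dv (m - j) (by omega) β x))).const_mul ((-1 : ℝ) ^ j)]
    refine Finset.sum_congr rfl fun j hj => ?_
    have hjk := memle j hj
    rw [pd_const_mul (f := fun y => v j α y * pd ν (v (m - j) β) y - pd ν (v j α) y * v (m - j) β y) p x _ (((dv j hjk α x).mul (dpv ν (m - j) (by omega) β x)).sub
        ((dpv ν j hjk α x).mul (dv (m - j) (by omega) β x))),
      pd_sub (f := fun y => v j α y * pd ν (v (m - j) β) y) (g := fun y => pd ν (v j α) y * v (m - j) β y) p x ((dv j hjk α x).mul (dpv ν (m - j) (by omega) β x))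
        ((dpv ν j hjk α x).mul (dv (m - j) (by omega) β x)),
      pd_mul p x (dv j hjk α x) (dpv ν (m - j) (by omega) β x),
      pd_mul p x (dpv ν j hjk α x) (dv (m - j) (by omega) β x)]
  -- split
  have split : ∑ j ∈ Finset.range (m + 1), (-1 : ℝ) ^ j *
      ((pd p (v j α) x * pd ν (v (m - j) β) x + v j α x * pd p (pd ν (v (m - j) β)) x)
        - (pd p (pd ν (v j α)) x * v (m - j) β x + pd ν (v j α) x * pd p (v (m - j) β) x))
      = ((∑ j ∈ Finset.range (m + 1), (-1 : ℝ) ^ j * (v j α x * pd p (pd ν (v (m - j) β)) x))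
        - (∑ j ∈ Finset.range (m + 1), (-1 : ℝ) ^ j * (pd p (pd ν (v j α)) x * v (m - j) β x)))
        + Tf v α β (m + 1) p ν x := by
    have hTf : Tf v α β (m + 1) p ν x = ∑ j ∈ Finset.range (m + 1), (-1 : ℝ) ^ j *
        (pd p (v j α) x * pd ν (v (m - j) β) x - pd ν (v j α) x * pd p (v (m - j) β) x) := by
      unfold Tf; simp only [Nat.add_sub_cancel]
    rw [hTf, ← Finset.sum_sub_distrib, ← Finset.sum_add_distrib]
    exact Finset.sum_congr rfl fun j _ => by ring
  -- piece B2
  have hB2 : ∑ j ∈ Finset.range (m + 1), (-1 : ℝ) ^ j * (v j α x * pd p (pd ν (v (m - j) β)) x)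
      = ∑ j ∈ Finset.range m, (-1 : ℝ) ^ j *
          (v j α x * (∑ μ, cmf η F p ν μ x * pd μ (v (m - 1 - j) β) x)) := by
    rw [Finset.sum_range_succ]
    have h0 : (-1 : ℝ) ^ m * (v m α x * pd p (pd ν (v (m - m) β)) x) = 0 := by
      rw [show m - m = 0 by omega, pd2_v0 hv0 β p ν x]; ring
    rw [h0, add_zero]
    refine Finset.sum_congr rfl fun j hj => ?_
    have hjm : j < m := Finset.mem_range.mp hj
    rw [hrec1 hF hv0 hv1 hvrec (m - j) (by omega) (by omega) p ν β x,
      show m - j - 1 = m - 1 - j by omega]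
  -- piece B3
  have hB3 : ∑ j ∈ Finset.range (m + 1), (-1 : ℝ) ^ j * (pd p (pd ν (v j α)) x * v (m - j) β x)
      = ∑ i ∈ Finset.range m, (-1 : ℝ) ^ (i + 1) *
          ((∑ μ, cmf η F p ν μ x * pd μ (v i α) x) * v (m - 1 - i) β x) := by
    rw [Finset.sum_range_succ']
    have h0 : (-1 : ℝ) ^ (0 : ℕ) * (pd p (pd ν (v 0 α)) x * v (m - 0) β x) = 0 := by
      rw [pd2_v0 hv0 α p ν x]; ring
    rw [h0, add_zero]
    refine Finset.sum_congr rfl fun i hi => ?_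
    have him : i < m := Finset.mem_range.mp hi
    rw [hrec1 hF hv0 hv1 hvrec (i + 1) (by omega) (by omega) p ν α x,
      show i + 1 - 1 = i from rfl, show m - (i + 1) = m - 1 - i by omega]
  -- combine into the N-term
  have hcomb : (∑ j ∈ Finset.range m, (-1 : ℝ) ^ j *
        (v j α x * (∑ μ, cmf η F p ν μ x * pd μ (v (m - 1 - j) β) x)))
      - (∑ i ∈ Finset.range m, (-1 : ℝ) ^ (i + 1) *
        ((∑ μ, cmf η F p ν μ x * pd μ (v i α) x) * v (m - 1 - i) β x))
      = ∑ μ, cmf η F p ν μ x * Nf v α β (m + 1) μ x := by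
    rw [← Finset.sum_sub_distrib]
    symm
    calc ∑ μ, cmf η F p ν μ x * Nf v α β (m + 1) μ x
        = ∑ μ, ∑ j ∈ Finset.range m, cmf η F p ν μ x * ((-1 : ℝ) ^ j *
            (pd μ (v j α) x * v (m - 1 - j) β x + v j α x * pd μ (v (m - 1 - j) β) x)) := by
          refine Finset.sum_congr rfl fun μ _ => ?_
          unfold Nf
          rw [show m + 1 - 1 = m from rfl, Finset.mul_sum]
          exact Finset.sum_congr rfl fun j _ => by
            rw [show m + 1 - 2 - j = m - 1 - j by omega]
      _ = ∑ j ∈ Finset.range m, ∑ μ, cmf η F p ν μ x * ((-1 : ℝ) ^ j *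
            (pd μ (v j α) x * v (m - 1 - j) β x + v j α x * pd μ (v (m - 1 - j) β) x)) :=
          Finset.sum_comm
      _ = ∑ j ∈ Finset.range m, ((-1 : ℝ) ^ j *
            (v j α x * (∑ μ, cmf η F p ν μ x * pd μ (v (m - 1 - j) β) x))
          - (-1 : ℝ) ^ (j + 1) *
            ((∑ μ, cmf η F p ν μ x * pd μ (v j α) x) * v (m - 1 - j) β x)) := by
          refine Finset.sum_congr rfl fun j _ => ?_
          rw [Finset.mul_sum, Finset.sum_mul, Finset.mul_sum, Finset.mul_sum,
            ← Finset.sum_sub_distrib]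
          exact Finset.sum_congr rfl fun μ _ => by ring
  rw [step, split, hB2, hB3, hcomb]

theorem L4 (α β p q r : Fin n) (x : Fin n → ℝ) :
    pd p (Sf v α β k q r) x
      = (∑ μ, cmf η F p q μ x * Tf v α β k r μ x)
        + (∑ μ, cmf η F p r μ x * Tf v α β k q μ x) := by
  have dpv : ∀ (i : Fin n) (j : ℕ), j ≤ k → ∀ (β' : Fin n) (y : Fin n → ℝ),
      DifferentiableAt ℝ (pd i (v j β')) y :=
    fun i j hj β' y => ((contDiff_pd i (hv j hj β')).differentiable (by simp)).differentiableAt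
  have memle : ∀ j ∈ Finset.range (k + 1), j ≤ k := fun j hj => by
    simp only [Finset.mem_range] at hj; omega
  have step : pd p (Sf v α β k q r) x = ∑ j ∈ Finset.range (k + 1), (-1 : ℝ) ^ j *
      ((pd p (pd q (v j α)) x * pd r (v (k - j) β) x + pd q (v j α) x * pd p (pd r (v (k - j) β)) x)
        + (pd p (pd r (v j α)) x * pd q (v (k - j) β) x
            + pd r (v j α) x * pd p (pd q (v (k - j) β)) x)) := by
    unfold Sf
    rw [pd_sum (A := fun j y => (-1 : ℝ) ^ j * (pd q (v j α) y * pd r (v (k - j) β) y + pd r (v j α) y * pd q (v (k - j) β) y)) p x fun j hj =>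
      (((dpv q j (memle j hj) α x).mul (dpv r (k - j) (Nat.sub_le k j) β x)).add
        ((dpv r j (memle j hj) α x).mul (dpv q (k - j) (Nat.sub_le k j) β x))).const_mul
          ((-1 : ℝ) ^ j)]
    refine Finset.sum_congr rfl fun j hj => ?_
    have hjk := memle j hj
    rw [pd_const_mul (f := fun y => pd q (v j α) y * pd r (v (k - j) β) y + pd r (v j α) y * pd q (v (k - j) β) y) p x _ (((dpv q j hjk α x).mul (dpv r (k - j) (Nat.sub_le k j) β x)).add
        ((dpv r j hjk α x).mul (dpv q (k - j) (Nat.sub_le k j) β x))),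
      pd_add (f := fun y => pd q (v j α) y * pd r (v (k - j) β) y) (g := fun y => pd r (v j α) y * pd q (v (k - j) β) y) p x ((dpv q j hjk α x).mul (dpv r (k - j) (Nat.sub_le k j) β x))
        ((dpv r j hjk α x).mul (dpv q (k - j) (Nat.sub_le k j) β x)),
      pd_mul p x (dpv q j hjk α x) (dpv r (k - j) (Nat.sub_le k j) β x),
      pd_mul p x (dpv r j hjk α x) (dpv q (k - j) (Nat.sub_le k j) β x)]
  have split : ∑ j ∈ Finset.range (k + 1), (-1 : ℝ) ^ j *
      ((pd p (pd q (v j α)) x * pd r (v (k - j) β) x + pd q (v j α) x * pd p (pd r (v (k - j) β)) x)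
        + (pd p (pd r (v j α)) x * pd q (v (k - j) β) x
            + pd r (v j α) x * pd p (pd q (v (k - j) β)) x))
      = ((∑ j ∈ Finset.range (k + 1), (-1 : ℝ) ^ j * (pd p (pd q (v j α)) x * pd r (v (k - j) β) x))
        + (∑ j ∈ Finset.range (k + 1), (-1 : ℝ) ^ j * (pd r (v j α) x * pd p (pd q (v (k - j) β)) x)))
        + ((∑ j ∈ Finset.range (k + 1), (-1 : ℝ) ^ j * (pd p (pd r (v j α)) x * pd q (v (k - j) β) x))
        + (∑ j ∈ Finset.range (k + 1), (-1 : ℝ) ^ j * (pd q (v j α) x * pd p (pd r (v (k - j) β)) x))) := by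
    rw [← Finset.sum_add_distrib, ← Finset.sum_add_distrib, ← Finset.sum_add_distrib]
    exact Finset.sum_congr rfl fun j _ => by ring
  -- generic treatment of one pair
  have pair : ∀ a b : Fin n,
      (∑ j ∈ Finset.range (k + 1), (-1 : ℝ) ^ j * (pd p (pd a (v j α)) x * pd b (v (k - j) β) x))
        + (∑ j ∈ Finset.range (k + 1), (-1 : ℝ) ^ j * (pd b (v j α) x * pd p (pd a (v (k - j) β)) x))
      = ∑ μ, cmf η F p a μ x * Tf v α β k b μ x := by
    intro a b
    have h1 : ∑ j ∈ Finset.range (k + 1), (-1 : ℝ) ^ j *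
        (pd p (pd a (v j α)) x * pd b (v (k - j) β) x)
        = ∑ i ∈ Finset.range k, (-1 : ℝ) ^ (i + 1) *
            ((∑ μ, cmf η F p a μ x * pd μ (v i α) x) * pd b (v (k - 1 - i) β) x) := by
      rw [Finset.sum_range_succ']
      have h0 : (-1 : ℝ) ^ (0 : ℕ) * (pd p (pd a (v 0 α)) x * pd b (v (k - 0) β) x) = 0 := by
        rw [pd2_v0 hv0 α p a x]; ring
      rw [h0, add_zero]
      refine Finset.sum_congr rfl fun i hi => ?_
      have hik : i < k := Finset.mem_range.mp hi
      rw [hrec1 hF hv0 hv1 hvrec (i + 1) (by omega) (by omega) p a α x,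
        show i + 1 - 1 = i from rfl, show k - (i + 1) = k - 1 - i by omega]
    have h2 : ∑ j ∈ Finset.range (k + 1), (-1 : ℝ) ^ j *
        (pd b (v j α) x * pd p (pd a (v (k - j) β)) x)
        = ∑ j ∈ Finset.range k, (-1 : ℝ) ^ j *
            (pd b (v j α) x * (∑ μ, cmf η F p a μ x * pd μ (v (k - 1 - j) β) x)) := by
      rw [Finset.sum_range_succ]
      have h0 : (-1 : ℝ) ^ k * (pd b (v k α) x * pd p (pd a (v (k - k) β)) x) = 0 := by
        rw [show k - k = 0 by omega, pd2_v0 hv0 β p a x]; ring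
      rw [h0, add_zero]
      refine Finset.sum_congr rfl fun j hj => ?_
      have hjk : j < k := Finset.mem_range.mp hj
      rw [hrec1 hF hv0 hv1 hvrec (k - j) (by omega) (by omega) p a β x,
        show k - j - 1 = k - 1 - j by omega]
    rw [h1, h2, ← Finset.sum_add_distrib]
    symm
    calc ∑ μ, cmf η F p a μ x * Tf v α β k b μ x
        = ∑ μ, ∑ j ∈ Finset.range k, cmf η F p a μ x * ((-1 : ℝ) ^ j *
            (pd b (v j α) x * pd μ (v (k - 1 - j) β) x
              - pd μ (v j α) x * pd b (v (k - 1 - j) β) x)) := by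
          refine Finset.sum_congr rfl fun μ _ => ?_
          unfold Tf
          rw [Finset.mul_sum]
      _ = ∑ j ∈ Finset.range k, ∑ μ, cmf η F p a μ x * ((-1 : ℝ) ^ j *
            (pd b (v j α) x * pd μ (v (k - 1 - j) β) x
              - pd μ (v j α) x * pd b (v (k - 1 - j) β) x)) := Finset.sum_comm
      _ = ∑ j ∈ Finset.range k, ((-1 : ℝ) ^ (j + 1) *
            ((∑ μ, cmf η F p a μ x * pd μ (v j α) x) * pd b (v (k - 1 - j) β) x)
          + (-1 : ℝ) ^ j *
            (pd b (v j α) x * (∑ μ, cmf η F p a μ x * pd μ (v (k - 1 - j) β) x))) := by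
          refine Finset.sum_congr rfl fun j _ => ?_
          rw [Finset.sum_mul, Finset.mul_sum, Finset.mul_sum, Finset.mul_sum,
            ← Finset.sum_add_distrib]
          exact Finset.sum_congr rfl fun μ _ => by ring
  rw [step, split, pair q r, pair r q]

theorem L5 (α β p q r : Fin n) (x : Fin n → ℝ) :
    pd p (pd q (pd r (Gf v α β k))) x
      = Dex (fun a b μ => cmf η F a b μ x)
          (fun a b e d => pd a (pd b (pd e (pd d F))) x)
          (fun ν κ => η ν κ)
          (fun ν => Pf v α β k ν x) (fun μ => Nf v α β k μ x)
          (fun a b => Tf v α β k a b x) p q r := by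
  have hqr : pd q (pd r (Gf v α β k))
      = fun y => (∑ ν, cmf η F q r ν y * Pf v α β k ν y) + Sf v α β k q r y :=
    funext fun y => L2 hF hv hv0 hv1 hvrec α β q r y
  have hA : ContDiff ℝ (⊤ : ℕ∞) (fun y => ∑ ν, cmf η F q r ν y * Pf v α β k ν y) :=
    ContDiff.sum fun ν _ => (contDiff_cmf hF η q r ν).mul (contDiff_Pf hv α β ν)
  have hB : ContDiff ℝ (⊤ : ℕ∞) (Sf v α β k q r) := contDiff_Sf hv α β q r
  rw [hqr, pd_add p x (hA.differentiable (by simp)).differentiableAt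
      (hB.differentiable (by simp)).differentiableAt,
    pd_sum' (A := fun ν y => cmf η F q r ν y * Pf v α β k ν y) p x fun ν _ => ((((contDiff_cmf hF η q r ν).mul
      (contDiff_Pf hv α β ν)).differentiable (by simp)).differentiableAt),
    L4 hF hv hv0 hv1 hvrec α β p q r x]
  have per : ∀ ν : Fin n, pd p (fun y => cmf η F q r ν y * Pf v α β k ν y) x
      = (∑ κ, η ν κ * pd p (pd q (pd r (pd κ F))) x) * Pf v α β k ν x
        + cmf η F q r ν x *
            ((∑ μ, cmf η F p ν μ x * Nf v α β k μ x) + Tf v α β k p ν x) := by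
    intro ν
    rw [pd_mul p x (((contDiff_cmf hF η q r ν).differentiable (by simp)).differentiableAt)
        (((contDiff_Pf hv α β ν).differentiable (by simp)).differentiableAt),
      pd_cmf hF η p q r ν x, L3 hF hv hv0 hv1 hvrec α β p ν x]
  rw [Finset.sum_congr rfl fun ν _ => per ν, Finset.sum_add_distrib]
  have hsplit : ∑ ν, cmf η F q r ν x *
        ((∑ μ, cmf η F p ν μ x * Nf v α β k μ x) + Tf v α β k p ν x)
      = (∑ ν, ∑ μ, cmf η F q r ν x * cmf η F p ν μ x * Nf v α β k μ x)
        + ∑ ν, cmf η F q r ν x * Tf v α β k p ν x := by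
    calc ∑ ν, cmf η F q r ν x *
          ((∑ μ, cmf η F p ν μ x * Nf v α β k μ x) + Tf v α β k p ν x)
        = ∑ ν, (cmf η F q r ν x * (∑ μ, cmf η F p ν μ x * Nf v α β k μ x)
            + cmf η F q r ν x * Tf v α β k p ν x) :=
          Finset.sum_congr rfl fun ν _ => mul_add _ _ _
      _ = (∑ ν, cmf η F q r ν x * (∑ μ, cmf η F p ν μ x * Nf v α β k μ x))
            + ∑ ν, cmf η F q r ν x * Tf v α β k p ν x := Finset.sum_add_distrib
      _ = (∑ ν, ∑ μ, cmf η F q r ν x * cmf η F p ν μ x * Nf v α β k μ x)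
            + ∑ ν, cmf η F q r ν x * Tf v α β k p ν x := by
          congr 1
          refine Finset.sum_congr rfl fun ν _ => ?_
          rw [Finset.mul_sum]
          exact Finset.sum_congr rfl fun μ _ => by ring
  rw [hsplit]
  simp only [Dex]
  ring


end Hier2

/-- the functions `G = Σ_{j=0}^{k} (−1)^j v_j^α v_{k−j}^β`, built from
the nonlocal potentials `v_j`, are symmetry characteristics of the associativity
(WDVV-type) equations. -/
theorem vv_hierarchy_is_symmetry_of_wdvv
    {n : ℕ} (hn : 1 ≤ n) (k : ℕ)
    (η : Matrix (Fin n) (Fin n) ℝ)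
    (hηsymm : ∀ α β, η α β = η β α)
    (hηinv : IsUnit η.det)
    (F : (Fin n → ℝ) → ℝ)
    (v : ℕ → Fin n → (Fin n → ℝ) → ℝ)
    (hF : ContDiff ℝ (⊤ : ℕ∞) F)
    (hv : ∀ j ≤ k, ∀ β, ContDiff ℝ (⊤ : ℕ∞) (v j β))
    (hWDVV : ∀ α β ν ρ, ∀ x : Fin n → ℝ,
      ∑ δ, ∑ γ, pd α (pd β (pd δ F)) x * η δ γ * pd γ (pd ν (pd ρ F)) x
        = ∑ δ, ∑ γ, pd α (pd ν (pd δ F)) x * η δ γ * pd γ (pd β (pd ρ F)) x)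
    (hv0 : ∀ β, ∀ x : Fin n → ℝ, v 0 β x = x β)
    (hv1 : 1 ≤ k → ∀ β, ∀ x : Fin n → ℝ, v 1 β x = ∑ ν, η β ν * pd ν F x)
    (hvrec : ∀ j, 2 ≤ j → j ≤ k → ∀ α β γ, ∀ x : Fin n → ℝ,
      pd α (pd γ (v j β)) x
        = ∑ ν, ∑ κ, η ν κ * pd α (pd γ (pd κ F)) x * pd ν (v (j - 1) β) x) :
    ∀ α β, ∀ α' β' ν' ρ', ∀ x : Fin n → ℝ,
      (∑ δ, ∑ γ, pd α' (pd β' (pd δ (fun y => ∑ j ∈ Finset.range (k + 1),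
            (-1 : ℝ) ^ j * v j α y * v (k - j) β y))) x * η δ γ
          * pd γ (pd ν' (pd ρ' F)) x)
        + (∑ δ, ∑ γ, pd α' (pd β' (pd δ F)) x * η δ γ
          * pd γ (pd ν' (pd ρ' (fun y => ∑ j ∈ Finset.range (k + 1),
            (-1 : ℝ) ^ j * v j α y * v (k - j) β y))) x)
      = (∑ δ, ∑ γ, pd α' (pd ν' (pd δ (fun y => ∑ j ∈ Finset.range (k + 1),
            (-1 : ℝ) ^ j * v j α y * v (k - j) β y))) x * η δ γ
          * pd γ (pd β' (pd ρ' F)) x)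
        + (∑ δ, ∑ γ, pd α' (pd ν' (pd δ F)) x * η δ γ
          * pd γ (pd β' (pd ρ' (fun y => ∑ j ∈ Finset.range (k + 1),
            (-1 : ℝ) ^ j * v j α y * v (k - j) β y))) x) := by
  intro α β p q s t x
  have hGf : (fun y => ∑ j ∈ Finset.range (k + 1),
      (-1 : ℝ) ^ j * v j α y * v (k - j) β y) = Gf v α β k := rfl
  rw [hGf]
  have side : ∀ q s : Fin n,
      (∑ δ, ∑ γ, pd p (pd q (pd δ (Gf v α β k))) x * η δ γ * pd γ (pd s (pd t F)) x)
        + (∑ δ, ∑ γ, pd p (pd q (pd δ F)) x * η δ γ * pd γ (pd s (pd t (Gf v α β k))) x)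
      = (∑ δ, Dex (fun a b μ => cmf η F a b μ x)
            (fun a b e d => pd a (pd b (pd e (pd d F))) x) (fun ν κ => η ν κ)
            (fun ν => Pf v α β k ν x) (fun μ => Nf v α β k μ x)
            (fun a b => Tf v α β k a b x) p q δ * cmf η F s t δ x)
        + (∑ γ, cmf η F p q γ x * Dex (fun a b μ => cmf η F a b μ x)
            (fun a b e d => pd a (pd b (pd e (pd d F))) x) (fun ν κ => η ν κ)
            (fun ν => Pf v α β k ν x) (fun μ => Nf v α β k μ x)
            (fun a b => Tf v α β k a b x) γ s t) := by
    intro q s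
    have t1 : ∑ δ, ∑ γ, pd p (pd q (pd δ (Gf v α β k))) x * η δ γ * pd γ (pd s (pd t F)) x
        = ∑ δ, Dex (fun a b μ => cmf η F a b μ x)
            (fun a b e d => pd a (pd b (pd e (pd d F))) x) (fun ν κ => η ν κ)
            (fun ν => Pf v α β k ν x) (fun μ => Nf v α β k μ x)
            (fun a b => Tf v α β k a b x) p q δ * cmf η F s t δ x := by
      refine Finset.sum_congr rfl fun δ _ => ?_
      calc ∑ γ, pd p (pd q (pd δ (Gf v α β k))) x * η δ γ * pd γ (pd s (pd t F)) x
          = pd p (pd q (pd δ (Gf v α β k))) x * cmf η F s t δ x := by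
            rw [show cmf η F s t δ x = ∑ γ, η δ γ * pd s (pd t (pd γ F)) x from rfl,
              Finset.mul_sum]
            refine Finset.sum_congr rfl fun γ _ => ?_
            rw [← c3_rot hF γ s t x]; ring
        _ = _ := by rw [L5 hF hv hv0 hv1 hvrec α β p q δ x]
    have t2 : ∑ δ, ∑ γ, pd p (pd q (pd δ F)) x * η δ γ * pd γ (pd s (pd t (Gf v α β k))) x
        = ∑ γ, cmf η F p q γ x * Dex (fun a b μ => cmf η F a b μ x)
            (fun a b e d => pd a (pd b (pd e (pd d F))) x) (fun ν κ => η ν κ)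
            (fun ν => Pf v α β k ν x) (fun μ => Nf v α β k μ x)
            (fun a b => Tf v α β k a b x) γ s t := by
      rw [Finset.sum_comm]
      refine Finset.sum_congr rfl fun γ _ => ?_
      calc ∑ δ, pd p (pd q (pd δ F)) x * η δ γ * pd γ (pd s (pd t (Gf v α β k))) x
          = cmf η F p q γ x * pd γ (pd s (pd t (Gf v α β k))) x := by
            rw [show cmf η F p q γ x = ∑ δ, η γ δ * pd p (pd q (pd δ F)) x from rfl,
              Finset.sum_mul]
            refine Finset.sum_congr rfl fun δ _ => ?_
            rw [hηsymm γ δ]; ring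
        _ = _ := by rw [L5 hF hv hv0 hv1 hvrec α β γ s t x]
    rw [t1, t2]
  rw [side q s, side s q]
  exact ALG_main (fun a b μ => cmf η F a b μ x)
    (fun a b e d => pd a (pd b (pd e (pd d F))) x) (fun ν κ => η ν κ)
    (fun ν => Pf v α β k ν x) (fun μ => Nf v α β k μ x)
    (fun a b => Tf v α β k a b x)
    (fun a b μ => cmf_symm hF η a b μ x)
    (fun a b e μ => W2pt hηsymm hWDVV a b e μ x)
    (fun a b e d => c4_rot hF a b e d x)
    (fun e a b c' d => W3pt hF hηsymm hWDVV e a b c' d x)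
    (fun a b => Tf_antisymm α β a b x)
    p q s t
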